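/- arXiv:1509.09289 — 3 statements merged into one kernel-verified Lean document; each statement's English description precedes it below -/
import Mathlib

section
/- Let F₁, F₂ be continuous functions on [0,∞) with |F_j(t)| ≤ C e^(Rt), and let P_j(ζ) = ζ ∫₀^∞ e^(-ζt) F_j(t) dt for Re(ζ) > R. If P₁(ζ) = P₂(ζ) for all ζ with Re(ζ) > R, then F₁(t) = F₂(t) for all t ≥ 0. -/
/-!
Substituting `x = e^{-t}` turns the Laplace transform of `G = F₁ - F₂` at `s + n + 1` into the
`n`-th moment of `h(x) = x^s G(-log x)` on `[0, 1]`; for `s` beyond the exponential type, `h` is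
continuous on `[0, 1]` and vanishes at `0`. If all moments of a continuous real `f` on `[a, b]`
vanish, then by Weierstrass approximation `∫ f² = ∫ (f - p) f` is arbitrarily small, so `f = 0`;
this applies to the real and imaginary parts of `h`.
-/

open MeasureTheory Set Filter Topology Polynomial

section Moments

variable {a b : ℝ}

theorem integral_eval_mul_eq_zero_of_moments {f : ℝ → ℝ} (hf : ContinuousOn f (uIcc a b))
    (h : ∀ n : ℕ, ∫ x in a..b, x ^ n * f x = 0) (p : ℝ[X]) :
    ∫ x in a..b, p.eval x * f x = 0 := by
  have hint (q : ℝ[X]) : IntervalIntegrable (fun x => q.eval x * f x) volume a b :=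
    (q.continuous.continuousOn.mul hf).intervalIntegrable
  induction p using Polynomial.induction_on' with
  | add p q hp hq =>
    simp only [eval_add, add_mul]
    rw [intervalIntegral.integral_add (hint p) (hint q), hp, hq, add_zero]
  | monomial n c =>
    simp only [eval_monomial, mul_assoc, intervalIntegral.integral_const_mul, h n, mul_zero]

theorem eqOn_zero_of_moments_eq_zero {f : ℝ → ℝ} (hab : a < b) (hf : ContinuousOn f (Icc a b))
    (h : ∀ n : ℕ, ∫ x in a..b, x ^ n * f x = 0) : EqOn f 0 (Icc a b) := by
  have hf' : ContinuousOn f (uIcc a b) := by rwa [uIcc_of_le hab.le]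
  have hff : IntervalIntegrable (fun x => f x * f x) volume a b := (hf'.mul hf').intervalIntegrable
  obtain ⟨M, hM⟩ := isCompact_Icc.exists_bound_of_continuousOn hf
  have hsmall : ∀ δ > 0, |∫ x in a..b, f x * f x| ≤ δ * M * (b - a) := by
    intro δ hδ
    obtain ⟨p, hp⟩ := exists_polynomial_near_of_continuousOn a b f hf δ hδ
    have hsub : ∫ x in a..b, f x * f x = ∫ x in a..b, (f x - p.eval x) * f x := by
      have hpf : IntervalIntegrable (fun x => p.eval x * f x) volume a b :=
        (p.continuous.continuousOn.mul hf').intervalIntegrable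
      simp only [sub_mul]
      rw [intervalIntegral.integral_sub hff hpf, integral_eval_mul_eq_zero_of_moments hf' h p,
        sub_zero]
    rw [hsub, ← Real.norm_eq_abs, ← abs_of_pos (sub_pos.2 hab)]
    refine intervalIntegral.norm_integral_le_of_norm_le_const fun x hx => ?_
    rw [uIoc_of_le hab.le] at hx
    rw [norm_mul, Real.norm_eq_abs, abs_sub_comm]
    exact mul_le_mul (hp x (Ioc_subset_Icc_self hx)).le (hM x (Ioc_subset_Icc_self hx))
      (norm_nonneg _) hδ.le
  have hsq : ∫ x in a..b, f x * f x = 0 := by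
    have hlim : Tendsto (fun δ => δ * M * (b - a)) (𝓝[>] 0) (𝓝 0) := by
      simpa using (((tendsto_id (x := 𝓝 (0 : ℝ))).mul_const M).mul_const (b - a)).mono_left
        nhdsWithin_le_nhds
    exact abs_nonpos_iff.mp (ge_of_tendsto hlim (eventually_nhdsWithin_of_forall hsmall))
  have hae : (fun x => f x * f x) =ᵐ[volume.restrict (Icc a b)] 0 := by
    rw [← Measure.restrict_congr_set Ioc_ae_eq_Icc]
    exact (intervalIntegral.integral_eq_zero_iff_of_le_of_nonneg_ae hab.le
      (Eventually.of_forall fun x => mul_self_nonneg (f x)) hff).mp hsq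
  intro x hx
  exact mul_self_eq_zero.mp
    (Measure.eqOn_Icc_of_ae_eq volume hab.ne hae (hf.mul hf) continuousOn_const hx)

theorem Complex.eqOn_zero_of_moments_eq_zero {f : ℝ → ℂ} (hab : a < b)
    (hf : ContinuousOn f (Icc a b)) (h : ∀ n : ℕ, ∫ x in a..b, (x : ℂ) ^ n * f x = 0) :
    EqOn f 0 (Icc a b) := by
  have hint : ∀ n : ℕ, IntervalIntegrable (fun x : ℝ => (x : ℂ) ^ n * f x) volume a b :=
    fun n => ((by fun_prop : Continuous fun x : ℝ => (x : ℂ) ^ n).continuousOn.mul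
      (by rwa [uIcc_of_le hab.le])).intervalIntegrable
  have hre := _root_.eqOn_zero_of_moments_eq_zero hab (Complex.continuous_re.comp_continuousOn hf)
    fun n => by
      have hn := intervalIntegral.intervalIntegral_re (hint n)
      rw [h n] at hn
      simpa only [Function.comp_apply, RCLike.re_to_complex, ← Complex.ofReal_pow,
        Complex.re_ofReal_mul, map_zero] using hn
  have him := _root_.eqOn_zero_of_moments_eq_zero hab (Complex.continuous_im.comp_continuousOn hf)
    fun n => by
      have hn := intervalIntegral.intervalIntegral_im (hint n)
      rw [h n] at hn
      simpa only [Function.comp_apply, RCLike.im_to_complex, ← Complex.ofReal_pow,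
        Complex.im_ofReal_mul, map_zero] using hn
  exact fun x hx => Complex.ext (hre hx) (him hx)

end Moments

theorem integral_Ioo_zero_one_eq_integral_Ioi_exp_neg {E : Type*} [NormedAddCommGroup E]
    [NormedSpace ℝ E] (g : ℝ → E) :
    ∫ x in Ioo 0 1, g x = ∫ t in Ioi 0, Real.exp (-t) • g (Real.exp (-t)) := by
  have himage : (fun t => Real.exp (-t)) '' Ioi 0 = Ioo 0 1 := by
    ext x
    constructor
    · rintro ⟨t, ht, rfl⟩
      exact ⟨Real.exp_pos _, Real.exp_lt_one_iff.mpr (neg_lt_zero.mpr ht)⟩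
    · rintro ⟨hx0, hx1⟩
      exact ⟨-Real.log x, neg_pos.mpr (Real.log_neg hx0 hx1), by simp [Real.exp_log hx0]⟩
  have hderiv (t : ℝ) : HasDerivWithinAt (fun t => Real.exp (-t)) (-Real.exp (-t)) (Ioi 0) t := by
    simpa using (hasDerivAt_neg t).exp.hasDerivWithinAt
  rw [← himage, integral_image_eq_integral_abs_deriv_smul measurableSet_Ioi (fun t _ => hderiv t)
    (fun s _ t _ hst => neg_injective (Real.exp_injective hst))]
  simp only [abs_neg, abs_of_pos (Real.exp_pos _)]

noncomputable def rpowMulCompNegLog (s : ℝ) (G : ℝ → ℂ) (x : ℝ) : ℂ :=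
  ((x ^ s : ℝ) : ℂ) * G (-Real.log x)

theorem integral_pow_mul_rpowMulCompNegLog (s : ℝ) (G : ℝ → ℂ) (n : ℕ) :
    ∫ x in 0..1, (x : ℂ) ^ n * rpowMulCompNegLog s G x =
      ∫ t in Ioi (0 : ℝ), Complex.exp (-((n + 1 + s : ℝ) : ℂ) * t) * G t := by
  rw [intervalIntegral.integral_of_le zero_le_one, integral_Ioc_eq_integral_Ioo,
    integral_Ioo_zero_one_eq_integral_Ioi_exp_neg]
  refine setIntegral_congr_fun measurableSet_Ioi fun t _ => ?_
  simp only [rpowMulCompNegLog, Real.log_exp, neg_neg, ← Real.exp_mul, Complex.real_smul,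
    Complex.ofReal_exp, ← Complex.exp_nat_mul, ← mul_assoc, ← Complex.exp_add]
  congr 2
  push_cast
  ring

section ExponentialType

variable {G : ℝ → ℂ} {C R : ℝ}

theorem norm_rpowMulCompNegLog_le {s : ℝ} (hs : 0 < s) (hRs : R < s)
    (hb : ∀ t, 0 ≤ t → ‖G t‖ ≤ C * Real.exp (R * t)) {x : ℝ} (hx : x ∈ Icc 0 1) :
    ‖rpowMulCompNegLog s G x‖ ≤ C * x ^ (s - R) := by
  rcases hx.1.eq_or_lt with rfl | hx0
  · simp [rpowMulCompNegLog, Real.zero_rpow hs.ne', Real.zero_rpow (sub_pos.2 hRs).ne']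
  have hlog : 0 ≤ -Real.log x := neg_nonneg.mpr (Real.log_nonpos hx0.le hx.2)
  calc ‖rpowMulCompNegLog s G x‖ = x ^ s * ‖G (-Real.log x)‖ := by
        rw [rpowMulCompNegLog, norm_mul, Complex.norm_real, Real.norm_of_nonneg (by positivity)]
    _ ≤ x ^ s * (C * Real.exp (R * -Real.log x)) := by gcongr; exact hb _ hlog
    _ = C * x ^ (s - R) := by
        rw [mul_neg, ← neg_mul, mul_comm (-R), Real.exp_mul, Real.exp_log hx0,
          Real.rpow_sub hx0, Real.rpow_neg hx0.le, div_eq_mul_inv]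
        ring

theorem continuousOn_rpowMulCompNegLog {s : ℝ} (hs : 0 < s) (hRs : R < s)
    (hc : ContinuousOn G (Ici 0)) (hb : ∀ t, 0 ≤ t → ‖G t‖ ≤ C * Real.exp (R * t)) :
    ContinuousOn (rpowMulCompNegLog s G) (Icc 0 1) := by
  intro x hx
  rcases hx.1.eq_or_lt with rfl | hx0
  · have hlim : Tendsto (fun x : ℝ => C * x ^ (s - R)) (𝓝 0) (𝓝 0) := by
      simpa [Real.zero_rpow (sub_pos.2 hRs).ne'] using
        ((Real.continuous_rpow_const (sub_pos.2 hRs).le).tendsto 0).const_mul C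
    have h0 : rpowMulCompNegLog s G 0 = 0 := by simp [rpowMulCompNegLog, Real.zero_rpow hs.ne']
    rw [ContinuousWithinAt, h0]
    exact squeeze_zero_norm' (eventually_nhdsWithin_of_forall fun y hy =>
      norm_rpowMulCompNegLog_le hs hRs hb hy) (hlim.mono_left nhdsWithin_le_nhds)
  · have hpos : ContinuousOn (rpowMulCompNegLog s G) (Icc 0 1 ∩ Ioi 0) := by
      refine ContinuousOn.mul (Complex.continuous_ofReal.comp_continuousOn
        (continuousOn_id.rpow_const fun y hy => Or.inl hy.2.ne')) (hc.comp ?_ ?_)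
      · exact (Real.continuousOn_log.mono fun y hy => hy.2.ne').neg
      · exact fun y hy => neg_nonneg.mpr (Real.log_nonpos hy.2.le hy.1.2)
    exact (hpos x ⟨hx, hx0⟩).mono_of_mem_nhdsWithin
      (inter_mem_nhdsWithin _ (Ioi_mem_nhds hx0))

theorem eqOn_zero_of_laplace_eventually_eq_zero (hc : ContinuousOn G (Ici 0))
    (hb : ∀ t, 0 ≤ t → ‖G t‖ ≤ C * Real.exp (R * t))
    (hL : ∀ᶠ s : ℝ in atTop, ∫ t in Ioi (0 : ℝ), Complex.exp (-(s : ℂ) * t) * G t = 0) :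
    EqOn G 0 (Ici 0) := by
  obtain ⟨s₀, hs₀⟩ := eventually_atTop.mp hL
  obtain ⟨s, hs₀s, hRs, hs⟩ : ∃ s, s₀ ≤ s ∧ R < s ∧ 0 < s :=
    ⟨max s₀ (max R 0) + 1, by grind, by grind, by grind⟩
  have hmoments (n : ℕ) : ∫ x in 0..1, (x : ℂ) ^ n * rpowMulCompNegLog s G x = 0 := by
    rw [integral_pow_mul_rpowMulCompNegLog]
    exact hs₀ _ (by linarith [n.cast_nonneg (α := ℝ)])
  have hzero := Complex.eqOn_zero_of_moments_eq_zero zero_lt_one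
    (continuousOn_rpowMulCompNegLog hs hRs hc hb) hmoments
  intro t ht
  have hx : Real.exp (-t) ∈ Icc (0 : ℝ) 1 :=
    ⟨(Real.exp_pos _).le, Real.exp_le_one_iff.mpr (neg_nonpos.mpr ht)⟩
  simpa [rpowMulCompNegLog, (Real.rpow_pos_of_pos (Real.exp_pos (-t)) s).ne'] using hzero hx

theorem integrableOn_exp_neg_mul_of_norm_le (hc : ContinuousOn G (Ici 0))
    (hb : ∀ t, 0 ≤ t → ‖G t‖ ≤ C * Real.exp (R * t)) {ζ : ℂ} (hζ : R < ζ.re) :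
    IntegrableOn (fun t : ℝ => Complex.exp (-ζ * t) * G t) (Ioi 0) := by
  refine Integrable.mono' ((exp_neg_integrableOn_Ioi 0 (sub_pos.2 hζ)).const_mul C) ?_ ?_
  · exact ((by fun_prop : Continuous fun t : ℝ => Complex.exp (-ζ * t)).continuousOn.mul
      (hc.mono Ioi_subset_Ici_self)).aestronglyMeasurable measurableSet_Ioi
  · refine (ae_restrict_iff' measurableSet_Ioi).mpr (Eventually.of_forall fun t ht => ?_)
    calc ‖Complex.exp (-ζ * t) * G t‖ ≤ Real.exp (-ζ.re * t) * (C * Real.exp (R * t)) := by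
          rw [norm_mul, Complex.norm_exp]
          gcongr
          · simp
          · exact hb t (le_of_lt ht)
      _ = C * Real.exp (-(ζ.re - R) * t) := by
          rw [← mul_assoc, mul_comm _ C, mul_assoc, ← Real.exp_add]
          ring_nf

end ExponentialType

/-- Injectivity of the modified Laplace transform `L{F}(ζ) = ζ ∫₀^∞ e^(-ζt) F(t) dt`
on continuous functions of exponential type `R`. -/
theorem stmt2 (R C : ℝ) (F₁ F₂ : ℝ → ℂ)
    (h₁ : ContinuousOn F₁ (Set.Ici 0)) (h₂ : ContinuousOn F₂ (Set.Ici 0))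
    (hb₁ : ∀ t : ℝ, 0 ≤ t → ‖F₁ t‖ ≤ C * Real.exp (R * t))
    (hb₂ : ∀ t : ℝ, 0 ≤ t → ‖F₂ t‖ ≤ C * Real.exp (R * t))
    (heq : ∀ ζ : ℂ, R < ζ.re →
      ζ * ∫ t in Set.Ioi (0 : ℝ), Complex.exp (-ζ * t) * F₁ t =
      ζ * ∫ t in Set.Ioi (0 : ℝ), Complex.exp (-ζ * t) * F₂ t) :
    ∀ t : ℝ, 0 ≤ t → F₁ t = F₂ t := by
  have hb : ∀ t, 0 ≤ t → ‖F₁ t - F₂ t‖ ≤ (C + C) * Real.exp (R * t) := fun t ht =>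
    (norm_sub_le _ _).trans (by rw [add_mul]; exact add_le_add (hb₁ t ht) (hb₂ t ht))
  have hL : ∀ᶠ s : ℝ in atTop,
      ∫ t in Ioi (0 : ℝ), Complex.exp (-(s : ℂ) * t) * (F₁ t - F₂ t) = 0 := by
    filter_upwards [eventually_gt_atTop (max R 0)] with s hs
    have hsR : R < (s : ℂ).re := by simpa using (le_max_left R 0).trans_lt hs
    have hs0 : (s : ℂ) ≠ 0 := by exact_mod_cast ((le_max_right R 0).trans_lt hs).ne'
    simp only [mul_sub]
    rw [integral_sub (integrableOn_exp_neg_mul_of_norm_le h₁ hb₁ hsR)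
      (integrableOn_exp_neg_mul_of_norm_le h₂ hb₂ hsR), mul_left_cancel₀ hs0 (heq _ hsR),
      sub_self]
  intro t ht
  exact sub_eq_zero.mp (eqOn_zero_of_laplace_eventually_eq_zero (h₁.sub h₂) hb hL ht)
end

section
/- Under the same hypotheses, the termwise fractional integral satisfies I_α F(t) = (1/(Γ(α+1)·2πi)) ∮_{|ξ|=A} ₂F₁(1,1;α+1; t/ξ) (F(ξ)/ξ) dξ for |t| < A < a and Re(α) > -1. -/
/-! The coefficients `c_k = (1)_k (1)_k / ((α+1)_k k!) = k!/(α+1)_k` of `₂F₁(1,1;α+1;·)` satisfy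
`k!/Γ(α+k+1) = c_k/Γ(α+1)`, and Cauchy's formula gives
`∮_{|ξ|=A} (t/ξ)^k F(ξ)/ξ dξ = 2πi t^k F^{(k)}(0)/k!`. Since `₂F₁` has radius of convergence `1`
and `|t/ξ| = |t|/A < 1` on the circle, the kernel series is dominated there by a convergent
numerical series, so it can be integrated term by term. -/

open MeasureTheory

/-- Pochhammer symbol `(x)_k` over `ℂ`. -/
noncomputable def poch (x : ℂ) (k : ℕ) : ℂ := (ascPochhammer ℂ k).eval x

open Complex Metric Nat Real

lemma natCast_ne_neg_of_re_pos {z : ℂ} (hz : 0 < z.re) (m : ℕ) : (m : ℂ) ≠ -z := fun h ↦ by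
  have := congrArg re h
  simp only [natCast_re, neg_re] at this
  linarith [m.cast_nonneg (α := ℝ)]

lemma poch_one_mul_poch_one_div (β : ℂ) (k : ℕ) :
    poch 1 k * poch 1 k / (poch β k * k !) = ordinaryHypergeometricCoefficient 1 1 β k := by
  simp only [poch, ordinaryHypergeometricCoefficient]
  ring

lemma factorial_div_Gamma_add_nat {β : ℂ} (hβ : ∀ m : ℕ, (m : ℂ) ≠ -β) (k : ℕ) :
    (k ! : ℂ) / Gamma (β + k) = ordinaryHypergeometricCoefficient 1 1 β k / Gamma β := by
  replace hβ : ∀ m : ℕ, β ≠ -m := fun m h ↦ hβ m (by rw [h, neg_neg])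
  have hΓ : Gamma (β + k) = Gamma β * poch β k := by
    rw [poch, ← Gamma_add_nat_div_Gamma_eq β hβ, mul_div_cancel₀ _ (Gamma_ne_zero hβ)]
  rw [hΓ, ← poch_one_mul_poch_one_div]
  simp only [poch, ascPochhammer_eval_one]
  field_simp

lemma summable_norm_ordinaryHypergeometricCoefficient_mul_pow {𝕂 : Type*} [RCLike 𝕂]
    {a b c : 𝕂} (habc : ∀ kn : ℕ, (kn : 𝕂) ≠ -a ∧ (kn : 𝕂) ≠ -b ∧ (kn : 𝕂) ≠ -c)
    {r : ℝ} (hr0 : 0 ≤ r) (hr : r < 1) :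
    Summable fun n ↦ ‖ordinaryHypergeometricCoefficient a b c n‖ * r ^ n := by
  have hr' : (r.toNNReal : ENNReal) < (ordinaryHypergeometricSeries 𝕂 a b c).radius := by
    rw [ordinaryHypergeometricSeries_radius_eq_one 𝕂 a b c habc]
    exact_mod_cast (Real.toNNReal_lt_one).2 hr
  simpa [ordinaryHypergeometricSeries, FormalMultilinearSeries.ofScalars_norm, hr0] using
    (ordinaryHypergeometricSeries 𝕂 a b c).summable_norm_mul_pow hr'

lemma DifferentiableOn.circleIntegral_div_pow_mul_div {F : ℂ → ℂ} {R : ℝ} (hR : 0 < R)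
    (hF : DifferentiableOn ℂ F (closedBall 0 R)) (t : ℂ) (k : ℕ) :
    ∮ ξ in C(0, R), (t / ξ) ^ k * (F ξ / ξ) = 2 * π * I * (iteratedDeriv k F 0 / k !) * t ^ k := by
  have hC := hF.circleIntegral_one_div_sub_center_pow_smul hR k
  simp only [sub_zero, smul_eq_mul] at hC
  calc ∮ ξ in C(0, R), (t / ξ) ^ k * (F ξ / ξ)
      = ∮ ξ in C(0, R), t ^ k * (1 / ξ ^ (k + 1) * F ξ) := by
        congr 1; funext ξ; ring
    _ = _ := by
        rw [circleIntegral.integral_const_mul, hC]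
        ring

theorem hasSum_circleIntegral_of_norm_le {E : Type*} [NormedAddCommGroup E] [NormedSpace ℂ E]
    [CompleteSpace E] {f : ℕ → ℂ → E} {c : ℂ} {R : ℝ} {bound : ℕ → ℝ}
    (hf : ∀ n, ContinuousOn (f n) (sphere c |R|))
    (hle : ∀ n, ∀ z ∈ sphere c |R|, ‖f n z‖ ≤ bound n) (hbound : Summable bound) :
    HasSum (fun n ↦ ∮ z in C(c, R), f n z) (∮ z in C(c, R), ∑' n, f n z) := by
  refine intervalIntegral.hasSum_integral_of_dominated_convergence
    (fun n _ ↦ |R| * bound n) (fun n ↦ ?_) (fun n ↦ ?_) ?_ intervalIntegrable_const ?_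
  · exact (hf n).circleIntegrable'.out.def'.1
  · refine ae_of_all _ fun θ _ ↦ ?_
    rw [norm_smul, deriv_circleMap, norm_mul, norm_circleMap_zero, norm_I, mul_one]
    exact mul_le_mul_of_nonneg_left (hle n _ (circleMap_mem_sphere' c R θ)) (abs_nonneg R)
  · exact ae_of_all _ fun θ _ ↦ hbound.mul_left |R|
  · refine ae_of_all _ fun θ _ ↦ (Summable.hasSum ?_).const_smul _
    exact hbound.of_norm_bounded fun n ↦ hle n _ (circleMap_mem_sphere' c R θ)

theorem hasSum_circleIntegral_mul_div_pow {a : ℕ → ℂ} {g : ℂ → ℂ} {R : ℝ} (hR : 0 < R) {t : ℂ}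
    (hg : ContinuousOn g (sphere 0 R)) (ha : Summable fun k ↦ ‖a k‖ * (‖t‖ / R) ^ k) :
    HasSum (fun k ↦ ∮ ξ in C(0, R), a k * ((t / ξ) ^ k * g ξ))
      (∮ ξ in C(0, R), (∑' k, a k * (t / ξ) ^ k) * g ξ) := by
  obtain ⟨C, hC⟩ := (isCompact_sphere (0 : ℂ) R).exists_bound_of_continuousOn hg
  simp_rw [← tsum_mul_right, mul_assoc]
  refine hasSum_circleIntegral_of_norm_le (bound := fun k ↦ ‖a k‖ * ((‖t‖ / R) ^ k * C))
    (fun k ↦ ?_) (fun k ξ hξ ↦ ?_) (by simpa only [mul_assoc] using ha.mul_right C)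
  · rw [abs_of_pos hR]
    have hne : ∀ ξ ∈ sphere (0 : ℂ) R, ξ ≠ 0 := fun ξ hξ ↦ ne_of_mem_sphere hξ hR.ne'
    exact continuousOn_const.mul (((continuousOn_const.div continuousOn_id hne).pow k).mul hg)
  · rw [abs_of_pos hR] at hξ
    rw [norm_mul, norm_mul, norm_pow, norm_div, mem_sphere_zero_iff_norm.1 hξ]
    gcongr
    exact hC ξ hξ

theorem stmt15_general (a : ℝ) (F : ℂ → ℂ)
    (hF : AnalyticOn ℂ F (Metric.ball 0 a))
    (α : ℂ) (hα : -1 < α.re) (t : ℂ) (A : ℝ) (htA : ‖t‖ < A) (hA : A < a) :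
    ∑' k : ℕ, ((k.factorial : ℂ) / Complex.Gamma (α + k + 1)) *
        (iteratedDeriv k F 0 / (k.factorial : ℂ)) * t ^ k =
      (1 / (Complex.Gamma (α + 1) * (2 * Real.pi * Complex.I))) *
        ∮ ξ in C(0, A),
          (∑' k : ℕ, (poch 1 k * poch 1 k) /
            (poch (α + 1) k * (k.factorial : ℂ)) * (t / ξ) ^ k) * F ξ / ξ := by
  have hβre : 0 < (α + 1).re := by rw [add_re, one_re]; linarith
  have hβ : ∀ m : ℕ, (m : ℂ) ≠ -(α + 1) := natCast_ne_neg_of_re_pos hβre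
  have hone : ∀ m : ℕ, (m : ℂ) ≠ -1 := natCast_ne_neg_of_re_pos (by simp)
  have hA0 : 0 < A := (norm_nonneg t).trans_lt htA
  have hFA : DifferentiableOn ℂ F (closedBall 0 A) :=
    hF.differentiableOn.mono (closedBall_subset_ball hA)
  have hFξ : ContinuousOn (fun ξ ↦ F ξ / ξ) (sphere 0 A) :=
    (hFA.continuousOn.mono sphere_subset_closedBall).div continuousOn_id
      fun ξ hξ ↦ ne_of_mem_sphere hξ hA0.ne'
  have hsum := hasSum_circleIntegral_mul_div_pow hA0 hFξ
    (summable_norm_ordinaryHypergeometricCoefficient_mul_pow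
      (fun m ↦ ⟨hone m, hone m, hβ m⟩) (by positivity) ((div_lt_one hA0).2 htA))
  simp_rw [poch_one_mul_poch_one_div, mul_div_assoc, ← hsum.tsum_eq, ← tsum_mul_left]
  refine tsum_congr fun k ↦ ?_
  rw [circleIntegral.integral_const_mul, hFA.circleIntegral_div_pow_mul_div hA0,
    add_right_comm, factorial_div_Gamma_add_nat hβ]
  field_simp [Gamma_ne_zero_of_re_pos hβre, two_pi_I_ne_zero]

/-- Under the same Hardy-class hypotheses as for the fractional derivative, the
termwise fractional integral has the contour-integral representation
`I_α F(t) = (1/(Γ(α+1) 2πi)) ∮_{|ξ|=A} ₂F₁(1,1;α+1;t/ξ) F(ξ)/ξ dξ` for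
`|t| < A < a` and `Re α > -1`. -/
theorem stmt15 (a : ℝ) (ha : 0 < a) (F : ℂ → ℂ)
    (hF : AnalyticOn ℂ F (Metric.ball 0 a)) (M : ℝ)
    (hH1 : ∀ A : ℝ, 0 < A → A < a →
      (∫ θ in (0 : ℝ)..(2 * Real.pi), ‖F (circleMap 0 A θ)‖) ≤ M)
    (α : ℂ) (hα : -1 < α.re) (t : ℂ) (A : ℝ) (htA : ‖t‖ < A) (hA : A < a) :
    ∑' k : ℕ, ((k.factorial : ℂ) / Complex.Gamma (α + k + 1)) *
        (iteratedDeriv k F 0 / (k.factorial : ℂ)) * t ^ k =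
      (1 / (Complex.Gamma (α + 1) * (2 * Real.pi * Complex.I))) *
        ∮ ξ in C(0, A),
          (∑' k : ℕ, (poch 1 k * poch 1 k) /
            (poch (α + 1) k * (k.factorial : ℂ)) * (t / ξ) ^ k) * F ξ / ξ :=
  stmt15_general a F hF α hα t A htA hA
end

section
/- Analyticity in α: for fixed t with |t| < a and F analytic on |t| < a with coefficients f_k, the function α ↦ D_α F(t)/Γ(α+1) = Σ_{k≥0} ((α+1)_k/k!) f_k t^k extends to an entire function of α, and its value at α = −n−1 (n a nonnegative integer) equals Ψ_n(t) = Σ_{j=0}^n (−1)^j binom(n,j) f_j t^j. -/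
/-!
On `‖α‖ < m` the Pochhammer coefficient `(α)_k / k!` is bounded by `(k + m).choose m`, which
grows only polynomially in `k`; since `‖t‖` is strictly below the radius of convergence, the
series is dominated by a convergent series locally uniformly in `α`, so its sum is entire.
For `Re α > -1` the identity `Γ(α + 1) (α + 1)_k = Γ(α + k + 1)` compares the two series
termwise, and at
`α = -n - 1` the coefficient `(-n)_k / k! = (-1)^k (n choose k)` vanishes for `k > n`.
-/

open Filter

theorem norm_ascPochhammer_eval_le {𝕜 : Type*} [NormedRing 𝕜] [NormOneClass 𝕜] {x : 𝕜}
    {y : ℝ} (h : ‖x‖ ≤ y) (k : ℕ) :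
    ‖(ascPochhammer 𝕜 k).eval x‖ ≤ (ascPochhammer ℝ k).eval y := by
  induction k with
  | zero => simp
  | succ k ih =>
    rw [ascPochhammer_succ_eval, ascPochhammer_succ_eval]
    have hk : ‖x + k‖ ≤ y + k :=
      (norm_add_le _ _).trans (add_le_add h (by simpa using Nat.norm_cast_le (α := 𝕜) k))
    exact (norm_mul_le _ _).trans (mul_le_mul ih hk (norm_nonneg _) ((norm_nonneg _).trans ih))

theorem norm_ascPochhammer_eval_div_factorial_le {𝕜 : Type*} [RCLike 𝕜] {x : 𝕜} {m : ℕ}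
    (hx : ‖x‖ ≤ m + 1) (k : ℕ) :
    ‖(ascPochhammer 𝕜 k).eval x / k.factorial‖ ≤ (k + m).choose m := by
  have hfac : (0 : ℝ) < k.factorial := mod_cast k.factorial_pos
  rw [norm_div, RCLike.norm_natCast, div_le_iff₀ hfac]
  calc ‖(ascPochhammer 𝕜 k).eval x‖ ≤ (ascPochhammer ℝ k).eval ((m + 1 : ℕ) : ℝ) :=
        norm_ascPochhammer_eval_le (by push_cast; exact hx) k
    _ = (k + m).choose m * k.factorial := by
        rw [ascPochhammer_nat_eq_natCast_ascFactorial, Nat.ascFactorial_eq_factorial_mul_choose,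
          add_comm m, ← Nat.choose_symm_add]
        push_cast
        ring

theorem summable_choose_mul_pow_of_lt (m : ℕ) {b : ℕ → ℝ} (hb0 : ∀ k, 0 ≤ b k) {ρ r : ℝ}
    (hρ : 0 ≤ ρ) (hρr : ρ < r) (hb : Summable fun k => b k * r ^ k) :
    Summable fun k => (k + m).choose m * b k * ρ ^ k := by
  have hr : 0 < r := hρ.trans_lt hρr
  have hq : ‖ρ / r‖ < 1 := by
    rw [Real.norm_of_nonneg (by positivity), div_lt_one hr]
    exact hρr
  have hsmall : ∀ᶠ k in atTop, (k + m).choose m * (ρ / r) ^ k ≤ 1 :=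
    (summable_choose_mul_geometric_of_norm_lt_one m hq).tendsto_atTop_zero.eventually_le_const
      one_pos
  refine hb.of_norm_bounded_eventually ?_
  rw [Nat.cofinite_eq_atTop]
  filter_upwards [hsmall] with k hk
  have hsplit :
      (k + m).choose m * b k * ρ ^ k = (k + m).choose m * (ρ / r) ^ k * (b k * r ^ k) := by
    rw [div_pow]
    field_simp
  rw [hsplit, Real.norm_of_nonneg (by have := hb0 k; positivity)]
  exact mul_le_of_le_one_left (by have := hb0 k; positivity) hk

theorem differentiable_tsum_ascPochhammer_div_factorial_mul {f : ℕ → ℂ} {t : ℂ} {r : ℝ}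
    (ht : ‖t‖ < r) (hf : Summable fun k => ‖f k‖ * r ^ k) :
    Differentiable ℂ fun α : ℂ =>
      ∑' k : ℕ, (ascPochhammer ℂ k).eval α / k.factorial * f k * t ^ k := by
  intro α₀
  obtain ⟨m, hm⟩ := exists_nat_gt ‖α₀‖
  have hbound : ∀ k, ∀ w ∈ Metric.ball (0 : ℂ) m,
      ‖(ascPochhammer ℂ k).eval w / k.factorial * f k * t ^ k‖ ≤
        (k + m).choose m * ‖f k‖ * ‖t‖ ^ k := by
    intro k w hw
    have hw' : ‖w‖ ≤ m + 1 := by rw [mem_ball_zero_iff] at hw; linarith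
    rw [norm_mul, norm_mul, norm_pow]
    gcongr
    exact norm_ascPochhammer_eval_div_factorial_le hw' k
  have hdiff : DifferentiableOn ℂ
      (fun α : ℂ => ∑' k : ℕ, (ascPochhammer ℂ k).eval α / k.factorial * f k * t ^ k)
      (Metric.ball 0 m) :=
    Complex.differentiableOn_tsum_of_summable_norm
      (summable_choose_mul_pow_of_lt m (fun _ => norm_nonneg _) (norm_nonneg t) ht hf)
      (fun k => (((ascPochhammer ℂ k).differentiable.div_const _).mul_const _).mul_const _
        |>.differentiableOn)
      Metric.isOpen_ball hbound
  exact hdiff.differentiableAt (Metric.isOpen_ball.mem_nhds (by simpa using hm))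

theorem Complex.Gamma_mul_ascPochhammer_eval {z : ℂ} (hz : 0 < z.re) (k : ℕ) :
    Gamma z * (ascPochhammer ℂ k).eval z = Gamma (z + k) := by
  have hz' : ∀ j : ℕ, z ≠ -j := fun j h => by
    have := congrArg re h
    simp only [neg_re, natCast_re] at this
    linarith [(Nat.cast_nonneg j : (0 : ℝ) ≤ j)]
  rw [← Gamma_add_nat_div_Gamma_eq z hz', mul_div_cancel₀ _ (Gamma_ne_zero_of_re_pos hz)]

theorem ascPochhammer_eval_neg_natCast_div_factorial {K : Type*} [DivisionRing K]
    [CharZero K] (n k : ℕ) :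
    (ascPochhammer K k).eval (-(n : K)) / k.factorial = (-1) ^ k * n.choose k := by
  rw [ascPochhammer_eval_neg_eq_descPochhammer, Nat.cast_choose_eq_descPochhammer_div,
    mul_div_assoc]

/-- Analyticity in the order `α`: for fixed `t` with `|t| < a` and Taylor
coefficients `f_k` of radius of convergence at least `a`, the function
`α ↦ D_α F(t)/Γ(α+1) = ∑ ((α+1)_k / k!) f_k t^k` is an entire function of `α`,
it agrees with `∑ (Γ(α+k+1)/(k! Γ(α+1))) f_k t^k` where `Re α > -1`, and its value
at `α = -n-1` equals `Ψ_n(t) = ∑_{j=0}^n (-1)^j (n choose j) f_j t^j`. -/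
theorem stmt16 (a : ℝ) (f : ℕ → ℂ)
    (hf : ∀ z : ℂ, ‖z‖ < a → Summable fun k => ‖f k‖ * ‖z‖ ^ k)
    (t : ℂ) (ht : ‖t‖ < a) :
    Differentiable ℂ (fun α : ℂ =>
      ∑' k : ℕ, ((ascPochhammer ℂ k).eval (α + 1) / (k.factorial : ℂ)) * f k * t ^ k) ∧
    (∀ α : ℂ, -1 < α.re →
      Complex.Gamma (α + 1) *
        ∑' k : ℕ, ((ascPochhammer ℂ k).eval (α + 1) / (k.factorial : ℂ)) * f k * t ^ k =
      ∑' k : ℕ, (Complex.Gamma (α + k + 1) / (k.factorial : ℂ)) * f k * t ^ k) ∧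
    (∀ n : ℕ,
      ∑' k : ℕ, ((ascPochhammer ℂ k).eval ((-(n : ℂ) - 1) + 1) / (k.factorial : ℂ)) *
          f k * t ^ k =
        ∑ j ∈ Finset.range (n + 1), (-1 : ℂ) ^ j * (n.choose j : ℂ) * f j * t ^ j) := by
  obtain ⟨r, htr, hra⟩ := exists_between ht
  have hr : ‖(r : ℂ)‖ = r := by simpa using (norm_nonneg t).trans htr.le
  have hfr : Summable fun k => ‖f k‖ * r ^ k := hr ▸ hf r (by rwa [hr])
  refine ⟨(differentiable_tsum_ascPochhammer_div_factorial_mul htr hfr).comp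
    (differentiable_id.add_const 1), fun α hα => ?_, fun n => ?_⟩
  · rw [← tsum_mul_left]
    refine tsum_congr fun k => ?_
    have hα' : 0 < (α + 1).re := by simp only [Complex.add_re, Complex.one_re]; linarith
    rw [add_right_comm, ← Complex.Gamma_mul_ascPochhammer_eval hα']
    ring
  · simp only [sub_add_cancel, ascPochhammer_eval_neg_natCast_div_factorial]
    exact tsum_eq_sum fun k hk => by
      rw [Nat.choose_eq_zero_of_lt (by simpa [Nat.lt_succ_iff] using hk)]
      simp
end
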